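/- Let ε > 0, μ ∈ ℝ, σ > 0, T > 0, and τ > 0. For the symmetric truncated Gaussian density f_T(z; μ, τσ) supported on [μ − T, μ + T], and shifted means h and h' = h + τ with T > τ, for every α > 1 the Rényi divergence of order α between the truncated Gaussian at h (conditioned on the overlap event [h' − T, h + T]) and the truncated Gaussian at h' (conditioned on the same interval) satisfies D_α ≤ α/(2σ²). Specifically, exp((α−1)·D_α) = exp(α(α−1)/(2σ²)) · (Φ((T − (1−α)τ)/(τσ)) − Φ((ατ − T)/(τσ))) / (Φ(T/(τσ)) − Φ((τ−T)/(τσ))) ≤ exp(α(α−1)/(2σ²)). -/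

import Mathlib

/-!
After completing the square, the integrand of `I` is `exp (α (α - 1) / (2σ²))` times a Gaussian
of scale `τσ` centred at `h + (1 - α) τ`, so `I` is that factor times a ratio of two
standard-normal masses of windows of the same width `(2T - τ)/(τσ)`. The window in the
numerator is the one of the denominator shifted right by `(α - 1)/σ ≥ 0`; since the latter
window has nonnegative midpoint, shifting it right can only decrease its mass. Hence
`I ≤ exp (α (α - 1) / (2σ²))`, and taking logarithms gives the Rényi bound.
-/

open Real MeasureTheory

/-- Standard normal CDF. -/
noncomputable def stdPhi (x : ℝ) : ℝ :=
  ∫ u in Set.Iic x, exp (-u ^ 2 / 2) / Real.sqrt (2 * π)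

lemma integrable_exp_neg_sq_div_two : Integrable fun u : ℝ => exp (-u ^ 2 / 2) := by
  convert integrable_exp_neg_mul_sq (show (0 : ℝ) < 1 / 2 by norm_num) using 3
  ring

lemma stdPhi_sub_stdPhi (a b : ℝ) :
    stdPhi b - stdPhi a = (∫ u in a..b, exp (-u ^ 2 / 2)) / √(2 * π) := by
  have hint : Integrable fun u : ℝ => exp (-u ^ 2 / 2) / √(2 * π) :=
    integrable_exp_neg_sq_div_two.div_const _
  rw [stdPhi, stdPhi, intervalIntegral.integral_Iic_sub_Iic hint.integrableOn hint.integrableOn,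
    intervalIntegral.integral_div]

lemma stdPhi_strictMono : StrictMono stdPhi := by
  intro a b hab
  rw [← sub_pos, stdPhi_sub_stdPhi]
  have hpos : 0 < ∫ u in a..b, exp (-u ^ 2 / 2) :=
    intervalIntegral.intervalIntegral_pos_of_pos
      ((by fun_prop : Continuous fun u : ℝ => exp (-u ^ 2 / 2)).intervalIntegrable a b)
      (fun _ => exp_pos _) hab
  positivity

lemma stdPhi_add_sub_stdPhi_add_le {A B d : ℝ} (hAB : A ≤ B) (hd : 0 ≤ d) (hmid : 0 ≤ A + B) :
    stdPhi (B + d) - stdPhi (A + d) ≤ stdPhi B - stdPhi A := by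
  set g : ℝ → ℝ := fun u => exp (-u ^ 2 / 2)
  have hg : Continuous g := by fun_prop
  -- `[B, B + d]` is `[A, A + d]` translated by `B - A`, and the density decreases on the way.
  have hmono : (∫ u in B..B + d, g u) ≤ ∫ u in A..A + d, g u := by
    calc (∫ u in B..B + d, g u) ≤ ∫ u in B..B + d, g (u - (B - A)) := by
          refine intervalIntegral.integral_mono_on (by linarith) (hg.intervalIntegrable _ _)
            ((hg.comp (continuous_sub_right _)).intervalIntegrable _ _) fun u hu => ?_
          have hu : B ≤ u := hu.1
          exact exp_le_exp.2 (by nlinarith)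
      _ = ∫ u in A..A + d, g u := by
          rw [intervalIntegral.integral_comp_sub_right g (B - A)]
          congr 1 <;> ring
  have : stdPhi (B + d) - stdPhi B ≤ stdPhi (A + d) - stdPhi A := by
    rw [stdPhi_sub_stdPhi B, stdPhi_sub_stdPhi A]
    gcongr
  linarith

lemma integral_exp_neg_sq_div_two_comp_affine (m a b : ℝ) {s : ℝ} (hs : 0 < s) :
    ∫ z in a..b, exp (-((z - m) / s) ^ 2 / 2)
      = s * √(2 * π) * (stdPhi ((b - m) / s) - stdPhi ((a - m) / s)) := by
  have hcomp := intervalIntegral.integral_comp_div_sub (fun u => exp (-u ^ 2 / 2)) hs.ne' (m / s)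
    (a := a) (b := b)
  simp only [← sub_div] at hcomp
  rw [hcomp, stdPhi_sub_stdPhi, smul_eq_mul]
  field_simp

lemma renyi_exponent_eq (σ τ h α z : ℝ) (hσ : σ ≠ 0) (hτ : τ ≠ 0) :
    -(α * ((z - h) ^ 2 / (2 * τ ^ 2 * σ ^ 2))) - (1 - α) * ((z - (h + τ)) ^ 2 / (2 * τ ^ 2 * σ ^ 2))
      = α * (α - 1) / (2 * σ ^ 2) - ((z - (h + (1 - α) * τ)) / (τ * σ)) ^ 2 / 2 := by
  field_simp
  ring

lemma integral_renyi_integrand_eq (σ τ T h α : ℝ) (hσ : 0 < σ) (hτ : 0 < τ) :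
    ∫ z in (h + τ - T)..(h + T),
        exp (-(α * ((z - h) ^ 2 / (2 * τ ^ 2 * σ ^ 2)))
          - (1 - α) * ((z - (h + τ)) ^ 2 / (2 * τ ^ 2 * σ ^ 2)))
      = exp (α * (α - 1) / (2 * σ ^ 2)) * (τ * σ * √(2 * π) *
          (stdPhi ((T - (1 - α) * τ) / (τ * σ)) - stdPhi ((α * τ - T) / (τ * σ)))) := by
  simp only [renyi_exponent_eq σ τ h α _ hσ.ne' hτ.ne', sub_eq_add_neg (α * (α - 1) / _),
    exp_add, intervalIntegral.integral_const_mul, ← neg_div]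
  rw [integral_exp_neg_sq_div_two_comp_affine _ _ _ (mul_pos hτ hσ)]
  congr 4 <;> ring

lemma stdPhi_shifted_window_le (σ τ T α : ℝ) (hσ : 0 < σ) (hτ : 0 < τ) (hT : τ < T)
    (hα : 1 ≤ α) :
    stdPhi ((T - (1 - α) * τ) / (τ * σ)) - stdPhi ((α * τ - T) / (τ * σ))
      ≤ stdPhi (T / (τ * σ)) - stdPhi ((τ - T) / (τ * σ)) := by
  have hB : (T - (1 - α) * τ) / (τ * σ) = T / (τ * σ) + (α - 1) / σ := by field_simp; ring
  have hA : (α * τ - T) / (τ * σ) = (τ - T) / (τ * σ) + (α - 1) / σ := by field_simp; ring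
  have hmid : (τ - T) / (τ * σ) + T / (τ * σ) = 1 / σ := by field_simp; ring
  rw [hB, hA]
  exact stdPhi_add_sub_stdPhi_add_le (by gcongr; linarith)
    (div_nonneg (by linarith) hσ.le) (by rw [hmid]; positivity)

theorem stmt_11 (σ τ T h α : ℝ) (hσ : 0 < σ) (hτ : 0 < τ) (hT : τ < T)
    (hα : 1 < α) :
    let c : ℝ := (1 / Real.sqrt (2 * π * τ ^ 2 * σ ^ 2)) *
      (1 / (stdPhi (T / (τ * σ)) - stdPhi ((τ - T) / (τ * σ))))
    let I : ℝ := c * ∫ z in (h + τ - T)..(h + T),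
      exp (-(α * ((z - h) ^ 2 / (2 * τ ^ 2 * σ ^ 2)))
        - (1 - α) * ((z - (h + τ)) ^ 2 / (2 * τ ^ 2 * σ ^ 2)))
    I = exp (α * (α - 1) / (2 * σ ^ 2)) *
        (stdPhi ((T - (1 - α) * τ) / (τ * σ)) - stdPhi ((α * τ - T) / (τ * σ))) /
        (stdPhi (T / (τ * σ)) - stdPhi ((τ - T) / (τ * σ))) ∧
    I ≤ exp (α * (α - 1) / (2 * σ ^ 2)) ∧
    (1 / (α - 1)) * Real.log I ≤ α / (2 * σ ^ 2) := by
  intro c I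
  have hs : 0 < τ * σ := mul_pos hτ hσ
  have hD : 0 < stdPhi (T / (τ * σ)) - stdPhi ((τ - T) / (τ * σ)) :=
    sub_pos.2 (stdPhi_strictMono (by gcongr; linarith))
  have hN : 0 < stdPhi ((T - (1 - α) * τ) / (τ * σ)) - stdPhi ((α * τ - T) / (τ * σ)) :=
    sub_pos.2 (stdPhi_strictMono (div_lt_div_of_pos_right (by linarith) hs))
  have hsqrt : √(2 * π * τ ^ 2 * σ ^ 2) = √(2 * π) * (τ * σ) := by
    rw [show 2 * π * τ ^ 2 * σ ^ 2 = 2 * π * (τ * σ) ^ 2 by ring,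
      sqrt_mul (by positivity), sqrt_sq hs.le]
  have hI : I = exp (α * (α - 1) / (2 * σ ^ 2)) *
      (stdPhi ((T - (1 - α) * τ) / (τ * σ)) - stdPhi ((α * τ - T) / (τ * σ))) /
      (stdPhi (T / (τ * σ)) - stdPhi ((τ - T) / (τ * σ))) := by
    simp only [I, c, integral_renyi_integrand_eq σ τ T h α hσ hτ, hsqrt]
    field_simp
  have hIle : I ≤ exp (α * (α - 1) / (2 * σ ^ 2)) := by
    rw [hI, div_le_iff₀ hD]
    exact mul_le_mul_of_nonneg_left (stdPhi_shifted_window_le σ τ T α hσ hτ hT hα.le)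
      (exp_pos _).le
  have hlog : log I ≤ α * (α - 1) / (2 * σ ^ 2) :=
    (log_le_iff_le_exp (by rw [hI]; positivity)).2 hIle
  refine ⟨hI, hIle, ?_⟩
  have hα1 : 0 < α - 1 := sub_pos.2 hα
  calc 1 / (α - 1) * log I ≤ 1 / (α - 1) * (α * (α - 1) / (2 * σ ^ 2)) := by gcongr
    _ = α / (2 * σ ^ 2) := by field_simp
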